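/- arXiv:2101.06195 — 3 statements merged into one kernel-verified Lean document; each statement's English description precedes it below -/
import Mathlib

section
/- Let P be a finite nonempty type, n : ℕ, E = EuclideanSpace ℝ (Fin n), and f : P → E → E a family of continuously differentiable vector fields. Then for all states ω ν : E, ν is reachable from ω in the arbitrary-switching reachability relation (the reflexive-transitive closure of the union over p : P of the mode-p flow relations with trivial domains Q p = Set.univ) if and only if there exist a switching signal (τ, σ) for P, a time T ≥ 0, and a solution φ of the switched system from ω following (τ, σ) up to time T, such that φ T = ν. -/
/-- The mode flow relation for vector field `g` with domain `Q`:
`ω` reaches `ν` by following `g` for some time `t ≥ 0` while staying in `Q`. -/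
def FlowRel {n : ℕ} (g : EuclideanSpace ℝ (Fin n) → EuclideanSpace ℝ (Fin n))
    (Q : Set (EuclideanSpace ℝ (Fin n))) (ω ν : EuclideanSpace ℝ (Fin n)) : Prop :=
  ∃ t : ℝ, 0 ≤ t ∧ ∃ φ : ℝ → EuclideanSpace ℝ (Fin n), φ 0 = ω ∧ φ t = ν ∧
    ∀ s ∈ Set.Icc (0 : ℝ) t, HasDerivWithinAt φ (g (φ s)) (Set.Icc (0 : ℝ) t) s ∧ φ s ∈ Q

/-- `(τ, σ)` is a switching signal: switching times are strictly increasing, start at `0`,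
and tend to infinity. -/
def IsSwitchingSignal (P : Type*) (τ : ℕ → ℝ) (σ : ℕ → P) : Prop :=
  StrictMono τ ∧ τ 0 = 0 ∧ Filter.Tendsto τ Filter.atTop Filter.atTop

/-- `φ` is a solution of the switched system `f` from `ω` following `(τ, σ)` up to time `T`. -/
def IsSwitchedSolution {n : ℕ} {P : Type*}
    (f : P → EuclideanSpace ℝ (Fin n) → EuclideanSpace ℝ (Fin n))
    (τ : ℕ → ℝ) (σ : ℕ → P) (ω : EuclideanSpace ℝ (Fin n)) (T : ℝ)
    (φ : ℝ → EuclideanSpace ℝ (Fin n)) : Prop :=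
  Continuous φ ∧ φ 0 = ω ∧
    ∀ i : ℕ, 1 ≤ i → ∀ s ∈ Set.Icc (τ (i - 1)) (τ i) ∩ Set.Icc (0 : ℝ) T,
      HasDerivWithinAt φ (f (σ i) (φ s)) (Set.Icc (τ (i - 1)) (τ i)) s

/-!
Reachability in the reflexive-transitive closure means following finitely many mode flows one
after the other. Concatenating them, with a switch at each junction, gives a switched solution;
it is completed to a switching signal on all of `[0, ∞)` by switching once per unit of time
afterwards. Conversely, a switched solution stopped at `T` visits `φ (min (τ k) T)` for every
`k`, and consecutive visits are joined by a flow of mode `σ (k + 1)`; since `τ k → ∞` the last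
of them is `φ T`.
-/

open Set Filter

section Shift

variable {𝕜 F : Type*} [NontriviallyNormedField 𝕜] [NormedAddCommGroup F] [NormedSpace 𝕜 F]
  {f : 𝕜 → F} {f' : F} {s : Set 𝕜} {x : 𝕜}

theorem HasDerivWithinAt.comp_add_const (a : 𝕜) (hf : HasDerivWithinAt f f' s (x + a)) :
    HasDerivWithinAt (fun y ↦ f (y + a)) f' ((· + a) ⁻¹' s) x := by
  have := hf.scomp x ((hasDerivAt_id' x).add_const a).hasDerivWithinAt (mapsTo_preimage _ _)
  rwa [one_smul] at this

theorem HasDerivWithinAt.comp_sub_const (a : 𝕜) (hf : HasDerivWithinAt f f' s (x - a)) :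
    HasDerivWithinAt (fun y ↦ f (y - a)) f' ((· - a) ⁻¹' s) x := by
  rw [sub_eq_add_neg] at hf
  simpa only [← sub_eq_add_neg] using hf.comp_add_const (-a)

end Shift

section Prepend

variable {X : Type*}

/-- Before time `0` the curve is frozen at `φ₀ 0`, so that it is continuous on all of `ℝ`. -/
noncomputable def prependCurve (t : ℝ) (φ₀ φ : ℝ → X) (s : ℝ) : X :=
  if s ≤ t then φ₀ (max 0 s) else φ (s - t)

theorem prependCurve_of_mem_Icc {t s : ℝ} {φ₀ φ : ℝ → X} (hs : s ∈ Icc 0 t) :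
    prependCurve t φ₀ φ s = φ₀ s := by
  simp [prependCurve, hs.2, hs.1]

theorem prependCurve_of_le {t s : ℝ} {φ₀ φ : ℝ → X} (ht : 0 ≤ t) (hjoin : φ₀ t = φ 0)
    (hs : t ≤ s) : prependCurve t φ₀ φ s = φ (s - t) := by
  rcases hs.eq_or_lt with rfl | hs
  · simp [prependCurve, ht, hjoin]
  · simp [prependCurve, hs.not_ge]

theorem continuous_prependCurve [TopologicalSpace X] {t : ℝ} {φ₀ φ : ℝ → X} (ht : 0 ≤ t)
    (h₀ : ContinuousOn φ₀ (Icc 0 t)) (h : Continuous φ) (hjoin : φ₀ t = φ 0) :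
    Continuous (prependCurve t φ₀ φ) := by
  refine continuous_if_le continuous_id continuous_const ?_
    (h.comp (continuous_sub_right t)).continuousOn ?_
  · exact h₀.comp (by fun_prop) fun s hs ↦ ⟨le_max_left _ _, max_le ht hs⟩
  · rintro s rfl
    simp [ht, hjoin]

variable {P : Type*}

def prependTimes (t : ℝ) (τ : ℕ → ℝ) : ℕ → ℝ
  | 0 => 0
  | i + 1 => t + τ i

/-- The value at `0` is never read: mode `σ i` governs the interval `[τ (i - 1), τ i]`. -/
def prependModes (p : P) (σ : ℕ → P) : ℕ → P
  | 0 | 1 => p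
  | i + 2 => σ (i + 1)

theorem IsSwitchingSignal.nonneg {τ : ℕ → ℝ} {σ : ℕ → P} (h : IsSwitchingSignal P τ σ) (k : ℕ) :
    0 ≤ τ k :=
  h.2.1 ▸ h.1.monotone k.zero_le

theorem IsSwitchingSignal.prepend {τ : ℕ → ℝ} {σ : ℕ → P} {t : ℝ} (ht : 0 < t) (p : P)
    (h : IsSwitchingSignal P τ σ) :
    IsSwitchingSignal P (prependTimes t τ) (prependModes p σ) := by
  refine ⟨strictMono_nat_of_lt_succ fun i ↦ ?_, rfl, ?_⟩
  · cases i with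
    | zero => simpa [prependTimes, h.2.1] using ht
    | succ i => simpa [prependTimes] using h.1 i.lt_succ_self
  · rw [← tendsto_add_atTop_iff_nat 1]
    exact tendsto_atTop_add_const_left _ t h.2.2

end Prepend

section Switched

variable {n : ℕ} {P : Type*} {f : P → EuclideanSpace ℝ (Fin n) → EuclideanSpace ℝ (Fin n)}
  {τ : ℕ → ℝ} {σ : ℕ → P} {T : ℝ} {φ : ℝ → EuclideanSpace ℝ (Fin n)}

abbrev SwitchingStep (f : P → EuclideanSpace ℝ (Fin n) → EuclideanSpace ℝ (Fin n))
    (a b : EuclideanSpace ℝ (Fin n)) : Prop :=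
  ∃ p : P, FlowRel (f p) univ a b

def SwitchedReachable (f : P → EuclideanSpace ℝ (Fin n) → EuclideanSpace ℝ (Fin n))
    (ω ν : EuclideanSpace ℝ (Fin n)) : Prop :=
  ∃ (τ : ℕ → ℝ) (σ : ℕ → P), IsSwitchingSignal P τ σ ∧
    ∃ T : ℝ, 0 ≤ T ∧ ∃ φ : ℝ → EuclideanSpace ℝ (Fin n),
      IsSwitchedSolution f τ σ ω T φ ∧ φ T = ν

theorem FlowRel.of_hasDerivWithinAt {g : EuclideanSpace ℝ (Fin n) → EuclideanSpace ℝ (Fin n)}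
    {a b : ℝ} (hab : a ≤ b)
    (hφ : ∀ s ∈ Icc a b, HasDerivWithinAt φ (g (φ s)) (Icc a b) s) :
    FlowRel g univ (φ a) (φ b) := by
  refine ⟨b - a, sub_nonneg.2 hab, fun s ↦ φ (s + a), by simp, by simp, fun s hs ↦ ⟨?_, trivial⟩⟩
  have hsa : s + a ∈ Icc a b := ⟨by linarith [hs.1], by linarith [hs.2]⟩
  simpa only [preimage_add_const_Icc, sub_self] using (hφ _ hsa).comp_add_const a

theorem SwitchedReachable.refl [Nonempty P] (ω : EuclideanSpace ℝ (Fin n)) :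
    SwitchedReachable f ω ω := by
  obtain ⟨p⟩ := ‹Nonempty P›
  refine ⟨(↑), fun _ ↦ p, ⟨Nat.strictMono_cast, Nat.cast_zero, tendsto_natCast_atTop_atTop⟩,
    0, le_rfl, fun s ↦ ω + s • f p ω, ⟨by fun_prop, by simp, ?_⟩, by simp⟩
  rintro i - s ⟨-, hs⟩
  obtain rfl : s = 0 := le_antisymm hs.2 hs.1
  simpa using (((hasDerivAt_id (0 : ℝ)).smul_const (f p ω)).const_add ω).hasDerivWithinAt

theorem IsSwitchedSolution.prepend {ω : EuclideanSpace ℝ (Fin n)} {t : ℝ}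
    {φ₀ : ℝ → EuclideanSpace ℝ (Fin n)} {p : P} (ht : 0 ≤ t) (hτ : IsSwitchingSignal P τ σ)
    (hφ₀ : ∀ s ∈ Icc 0 t, HasDerivWithinAt φ₀ (f p (φ₀ s)) (Icc 0 t) s) (hjoin : φ₀ t = ω)
    (hφ : IsSwitchedSolution f τ σ ω T φ) :
    IsSwitchedSolution f (prependTimes t τ) (prependModes p σ) (φ₀ 0) (t + T)
      (prependCurve t φ₀ φ) := by
  obtain ⟨hcont, hφ0, hderiv⟩ := hφ
  have hjoin' : φ₀ t = φ 0 := hjoin.trans hφ0.symm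
  refine ⟨continuous_prependCurve ht (fun s hs ↦ (hφ₀ s hs).continuousWithinAt) hcont hjoin',
    prependCurve_of_mem_Icc ⟨le_rfl, ht⟩, ?_⟩
  rintro (_ | _ | i) hi s ⟨hs, hsT⟩
  · omega
  · simp only [prependTimes, prependModes, hτ.2.1, add_zero, zero_add, Nat.sub_self] at hs ⊢
    rw [prependCurve_of_mem_Icc hs]
    exact (hφ₀ s hs).congr (fun y hy ↦ prependCurve_of_mem_Icc hy) (prependCurve_of_mem_Icc hs)
  · simp only [prependTimes, prependModes, Nat.add_sub_cancel] at hs ⊢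
    have hts : t ≤ s := by linarith [hτ.nonneg i, hs.1]
    have hmem : s - t ∈ Icc (τ (i + 1 - 1)) (τ (i + 1)) ∩ Icc 0 T :=
      ⟨⟨by simp only [Nat.add_sub_cancel]; linarith [hs.1], by linarith [hs.2]⟩,
        ⟨by linarith, by linarith [hsT.2]⟩⟩
    have hd := (hderiv (i + 1) (by omega) (s - t) hmem).comp_sub_const t
    rw [Nat.add_sub_cancel, preimage_sub_const_Icc, add_comm (τ i), add_comm (τ (i + 1))] at hd
    rw [prependCurve_of_le ht hjoin' hts]
    exact hd.congr (fun y hy ↦ prependCurve_of_le ht hjoin' (by linarith [hτ.nonneg i, hy.1]))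
      (prependCurve_of_le ht hjoin' hts)

theorem SwitchedReachable.head {a b c : EuclideanSpace ℝ (Fin n)} {p : P}
    (hab : FlowRel (f p) univ a b) (hbc : SwitchedReachable f b c) : SwitchedReachable f a c := by
  obtain ⟨t, ht, φ₀, rfl, rfl, hφ₀⟩ := hab
  obtain ⟨τ, σ, hτ, T, hT, φ, hφ, rfl⟩ := hbc
  rcases ht.eq_or_lt with rfl | ht
  · exact ⟨τ, σ, hτ, T, hT, φ, hφ, rfl⟩
  refine ⟨_, _, hτ.prepend ht p, t + T, by linarith, _,
    hφ.prepend ht.le hτ (fun s hs ↦ (hφ₀ s hs).1) rfl, ?_⟩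
  rw [prependCurve_of_le ht.le hφ.2.1.symm (by linarith), add_sub_cancel_left]

theorem IsSwitchedSolution.reflGen_switchingStep {ω : EuclideanSpace ℝ (Fin n)}
    (hτ : IsSwitchingSignal P τ σ) (hφ : IsSwitchedSolution f τ σ ω T φ) (k : ℕ) :
    Relation.ReflGen (SwitchingStep f) (φ (min (τ k) T)) (φ (min (τ (k + 1)) T)) := by
  have hτk : τ k ≤ τ (k + 1) := hτ.1.monotone k.le_succ
  by_cases hk : τ k ≤ T
  · rw [min_eq_left hk]
    refine .single ⟨σ (k + 1), FlowRel.of_hasDerivWithinAt (le_min hτk hk) fun s hs ↦ ?_⟩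
    have hd := hφ.2.2 (k + 1) (by omega) s ⟨⟨hs.1, hs.2.trans (min_le_left _ _)⟩,
      ⟨(hτ.nonneg k).trans hs.1, hs.2.trans (min_le_right _ _)⟩⟩
    rw [Nat.add_sub_cancel] at hd
    exact hd.mono (Icc_subset_Icc_right (min_le_left _ _))
  · push Not at hk
    rw [min_eq_right hk.le, min_eq_right (hk.le.trans hτk)]

theorem SwitchedReachable.reflTransGen {ω ν : EuclideanSpace ℝ (Fin n)}
    (h : SwitchedReachable f ω ν) :
    Relation.ReflTransGen (SwitchingStep f) ω ν := by
  obtain ⟨τ, σ, hτ, T, hT, φ, hφ, rfl⟩ := h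
  have hvisit : ∀ k, Relation.ReflTransGen (SwitchingStep f) ω (φ (min (τ k) T)) := by
    intro k
    induction k with
    | zero => rw [hτ.2.1, min_eq_left hT, hφ.2.1]
    | succ k ih => exact ih.trans (hφ.reflGen_switchingStep hτ k).to_reflTransGen
  obtain ⟨N, hN⟩ := (hτ.2.2.eventually_ge_atTop T).exists
  simpa [min_eq_right hN] using hvisit N

end Switched

theorem arbitrary_switching_adequacy_general {n : ℕ} {P : Type*} [Nonempty P]
    (f : P → EuclideanSpace ℝ (Fin n) → EuclideanSpace ℝ (Fin n))
    (ω ν : EuclideanSpace ℝ (Fin n)) :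
    Relation.ReflTransGen (fun a b => ∃ p : P, FlowRel (f p) Set.univ a b) ω ν ↔
      ∃ (τ : ℕ → ℝ) (σ : ℕ → P), IsSwitchingSignal P τ σ ∧
        ∃ T : ℝ, 0 ≤ T ∧ ∃ φ : ℝ → EuclideanSpace ℝ (Fin n),
          IsSwitchedSolution f τ σ ω T φ ∧ φ T = ν := by
  refine ⟨fun h ↦ ?_, SwitchedReachable.reflTransGen⟩
  induction h using Relation.ReflTransGen.head_induction_on with
  | refl => exact SwitchedReachable.refl (f := f) ν
  | head hstep _ ih =>
    obtain ⟨p, hp⟩ := hstep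
    exact SwitchedReachable.head hp ih

theorem arbitrary_switching_adequacy {n : ℕ} {P : Type*} [Fintype P] [Nonempty P]
    (f : P → EuclideanSpace ℝ (Fin n) → EuclideanSpace ℝ (Fin n))
    (hf : ∀ p, ContDiff ℝ 1 (f p)) (ω ν : EuclideanSpace ℝ (Fin n)) :
    Relation.ReflTransGen (fun a b => ∃ p : P, FlowRel (f p) Set.univ a b) ω ν ↔
      ∃ (τ : ℕ → ℝ) (σ : ℕ → P), IsSwitchingSignal P τ σ ∧
        ∃ T : ℝ, 0 ≤ T ∧ ∃ φ : ℝ → EuclideanSpace ℝ (Fin n),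
          IsSwitchedSolution f τ σ ω T φ ∧ φ T = ν :=
  arbitrary_switching_adequacy_general f ω ν
end

section
/- Define fA (x₁, x₂) = (−x₁/8 − x₂, 2x₁ − x₂/8) on ℝ × ℝ and VA (x₁, x₂) = 2x₁² + x₂². Then every solution of fA satisfies the exponential decay bound VA(φ t) ≤ VA(φ 0)·exp(−t/4): for every t ≥ 0 and every φ : ℝ → ℝ × ℝ that has derivative fA (φ s) within Set.Icc 0 t at each s ∈ Set.Icc 0 t, one has 2·(φ t).1² + (φ t).2² ≤ (2·(φ 0).1² + (φ 0).2²)·Real.exp (−t/4). -/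
/-!
Along `fA` the cross terms `∓4 x₁ x₂` of the derivative of `VA = 2 x₁² + x₂²` cancel, leaving
`-x₁²/2 - x₂²/4 = -VA/4`. So `VA ∘ φ` satisfies `u' = -u/4`, and Grönwall's inequality gives
`VA (φ t) ≤ VA (φ 0) e^{-t/4}`.
-/

/-- The vector field `fA (x₁, x₂) = (−x₁/8 − x₂, 2x₁ − x₂/8)`. -/
noncomputable def fA (x : ℝ × ℝ) : ℝ × ℝ := (-x.1 / 8 - x.2, 2 * x.1 - x.2 / 8)

open Set Real ContinuousLinearMap

theorem le_mul_exp_of_hasDerivWithinAt_le_mul {u u' : ℝ → ℝ} {K a b : ℝ}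
    (hu : ∀ s ∈ Icc a b, HasDerivWithinAt u (u' s) (Icc a b) s)
    (bound : ∀ s ∈ Icc a b, u' s ≤ K * u s) :
    ∀ s ∈ Icc a b, u s ≤ u a * exp (K * (s - a)) := by
  intro s hs
  rw [← gronwallBound_ε0]
  refine le_gronwallBound_of_liminf_deriv_right_le (f' := u')
    (fun s hs => (hu s hs).continuousWithinAt) (fun x hx r hr => ?_) le_rfl
    (fun x hx => by simpa using bound x (Ico_subset_Icc_self hx)) s hs
  exact ((hu x (Ico_subset_Icc_self hx)).mono_of_mem_nhdsWithin
    (Icc_mem_nhdsGE_of_mem hx)).liminf_right_slope_le hr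

theorem apply_le_mul_exp_of_lyapunov_decay {E : Type*} [NormedAddCommGroup E] [NormedSpace ℝ E]
    {f : E → E} {V : E → ℝ} {V' : E → E →L[ℝ] ℝ} {c a b : ℝ} {φ : ℝ → E}
    (hV : ∀ x, HasFDerivAt V (V' x) x) (hdecay : ∀ x, V' x (f x) ≤ -c * V x)
    (hφ : ∀ s ∈ Icc a b, HasDerivWithinAt φ (f (φ s)) (Icc a b) s) :
    ∀ s ∈ Icc a b, V (φ s) ≤ V (φ a) * exp (-c * (s - a)) :=
  le_mul_exp_of_hasDerivWithinAt_le_mul (u := V ∘ φ)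
    (fun s hs => (hV (φ s)).comp_hasDerivWithinAt s (hφ s hs)) (fun s _ => hdecay (φ s))

noncomputable def VA (x : ℝ × ℝ) : ℝ := 2 * x.1 ^ 2 + x.2 ^ 2

noncomputable def dVA (x : ℝ × ℝ) : ℝ × ℝ →L[ℝ] ℝ := (4 * x.1) • fst ℝ ℝ ℝ + (2 * x.2) • snd ℝ ℝ ℝ

theorem hasFDerivAt_VA (x : ℝ × ℝ) : HasFDerivAt VA (dVA x) x := by
  have hfst : HasFDerivAt (fun x : ℝ × ℝ => x.1) (fst ℝ ℝ ℝ) x := hasFDerivAt_fst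
  have hsnd : HasFDerivAt (fun x : ℝ × ℝ => x.2) (snd ℝ ℝ ℝ) x := hasFDerivAt_snd
  refine (((hfst.pow 2).const_mul 2).add (hsnd.pow 2)).congr_fderiv ?_
  simp only [dVA, Nat.add_one_sub_one, pow_one]
  module

theorem dVA_apply_fA (x : ℝ × ℝ) : dVA x (fA x) = -(1 / 4) * VA x := by
  simp only [dVA, fA, VA, add_apply, smul_apply, coe_fst', coe_snd', smul_eq_mul]
  ring

theorem lyapunov_exponential_decay_fA :
    ∀ t : ℝ, 0 ≤ t → ∀ φ : ℝ → ℝ × ℝ,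
      (∀ s ∈ Set.Icc (0 : ℝ) t, HasDerivWithinAt φ (fA (φ s)) (Set.Icc (0 : ℝ) t) s) →
      2 * (φ t).1 ^ 2 + (φ t).2 ^ 2 ≤
        (2 * (φ 0).1 ^ 2 + (φ 0).2 ^ 2) * Real.exp (-t / 4) := by
  intro t ht φ hφ
  have decay := apply_le_mul_exp_of_lyapunov_decay hasFDerivAt_VA (fun x => (dVA_apply_fA x).le)
    hφ t ⟨ht, le_rfl⟩
  simpa [VA, div_eq_inv_mul, neg_mul] using decay
end

section
/- Define fA (x₁, x₂) = (−x₁/8 − x₂, 2x₁ − x₂/8) and fB (x₁, x₂) = (−x₁/8 − 2x₂, x₁ − x₂/8) on ℝ × ℝ. The origin is stable under slow switching with minimum dwell time 3 between fA and fB: for every ε > 0 there exists δ > 0 such that for every ω with ‖ω‖ < δ, every m ≥ 1, every sequence of modes q 1, …, q m ∈ {A, B}, every sequence of durations s 1, …, s m with s i ≥ 3 for all 1 ≤ i < m and s m ≥ 0, and every continuous φ : ℝ → ℝ × ℝ with φ 0 = ω that on each consecutive interval of length s i solves the ODE given by the vector field of mode q i, one has ‖φ r‖ < ε for all r ∈ Set.Icc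 0 (s 1 + ⋯ + s m). -/
/-- The two switching modes `A` and `B`. -/
inductive Mode : Type
  | A : Mode
  | B : Mode

/-- The vector field `fB (x₁, x₂) = (−x₁/8 − 2x₂, x₁ − x₂/8)`. -/
noncomputable def fB (x : ℝ × ℝ) : ℝ × ℝ := (-x.1 / 8 - 2 * x.2, x.1 - x.2 / 8)

/-- The vector field of each mode. -/
noncomputable def modeField : Mode → ℝ × ℝ → ℝ × ℝ
  | Mode.A => fA
  | Mode.B => fB

/-- The Euclidean norm on `ℝ × ℝ`. -/
noncomputable def enorm2 (x : ℝ × ℝ) : ℝ := Real.sqrt (x.1 ^ 2 + x.2 ^ 2)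

/-! Along mode `A` the form `V_A = 2x₁² + x₂²`, and along mode `B` the form `V_B = x₁² + 2x₂²`,
satisfies `V' = -V / 4`, so a dwell time of at least `3` shrinks it by `exp (-3 / 4) ≤ 1 / 2`.
Since `V_A ≤ 2 V_B` and `V_B ≤ 2 V_A`, a switch at most doubles the active form; hence its value
at the switching times never increases, and `‖φ r‖² ≤ V_{q i} (φ r) ≤ V_{q 1} (ω) ≤ 2 ‖ω‖²`. -/

open Set Real

theorem HasDerivWithinAt.fst {φ : ℝ → ℝ × ℝ} {v : ℝ × ℝ} {s : Set ℝ} {x : ℝ}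
    (h : HasDerivWithinAt φ v s x) : HasDerivWithinAt (fun t => (φ t).1) v.1 s x := by
  simpa using h.hasFDerivWithinAt.fst.hasDerivWithinAt

theorem HasDerivWithinAt.snd {φ : ℝ → ℝ × ℝ} {v : ℝ × ℝ} {s : Set ℝ} {x : ℝ}
    (h : HasDerivWithinAt φ v s x) : HasDerivWithinAt (fun t => (φ t).2) v.2 s x := by
  simpa using h.hasFDerivWithinAt.snd.hasDerivWithinAt

theorem eq_exp_mul_of_hasDerivWithinAt_eq_neg_mul {g : ℝ → ℝ} {a b c : ℝ}
    (hg : ∀ x ∈ Icc a b, HasDerivWithinAt g (-c * g x) (Icc a b) x) :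
    ∀ x ∈ Icc a b, g x = exp (-c * (x - a)) * g a := by
  have hconst : ∀ x ∈ Icc a b, exp (c * (x - a)) * g x = exp (c * (a - a)) * g a := by
    refine constant_of_has_deriv_right_zero ?_ fun x hx => ?_
    · exact (by fun_prop : Continuous fun t => exp (c * (t - a))).continuousOn.mul
        fun x hx => (hg x hx).continuousWithinAt
    · have hgx := (hg x (Ico_subset_Icc_self hx)).mono_of_mem_nhdsWithin
        (Icc_mem_nhdsGE_of_mem hx)
      have hexp : HasDerivWithinAt (fun t => exp (c * (t - a))) (exp (c * (x - a)) * c)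
          (Ici x) x :=
        (((hasDerivAt_id x).sub_const a).const_mul c).exp.hasDerivWithinAt.congr_deriv (by simp)
      rw [show (0 : ℝ) = exp (c * (x - a)) * c * g x + exp (c * (x - a)) * (-c * g x) by ring]
      exact hexp.mul hgx
  intro x hx
  have hx' := hconst x hx
  rw [sub_self, mul_zero, exp_zero, one_mul] at hx'
  rw [← hx', ← mul_assoc, ← exp_add]
  simp

theorem exists_mem_Icc_consecutive {α : Type*} [LinearOrder α] (t : ℕ → α) {m : ℕ}
    (hm : 1 ≤ m) {r : α} (h0 : t 0 ≤ r) (hrm : r ≤ t m) :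
    ∃ i, 1 ≤ i ∧ i ≤ m ∧ r ∈ Icc (t (i - 1)) (t i) := by
  induction m, hm using Nat.le_induction with
  | base => exact ⟨1, le_rfl, le_rfl, h0, hrm⟩
  | succ n hn ih =>
    by_cases hrn : r ≤ t n
    · obtain ⟨i, hi1, hin, hri⟩ := ih hrn
      exact ⟨i, hi1, hin.trans n.le_succ, hri⟩
    · exact ⟨n + 1, n.succ_pos, le_rfl, (not_le.1 hrn).le, hrm⟩

theorem two_le_exp_three_div_four : (2 : ℝ) ≤ exp (3 / 4) := by
  linarith [quadratic_le_exp_of_nonneg (by norm_num : (0 : ℝ) ≤ 3 / 4)]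

noncomputable def lyap : Mode → ℝ × ℝ → ℝ
  | Mode.A, x => 2 * x.1 ^ 2 + x.2 ^ 2
  | Mode.B, x => x.1 ^ 2 + 2 * x.2 ^ 2

section Lyap

variable (q : Mode) (x : ℝ × ℝ)

theorem lyap_nonneg : 0 ≤ lyap q x := by
  cases q <;> simp only [lyap] <;> positivity

theorem sq_add_sq_le_lyap : x.1 ^ 2 + x.2 ^ 2 ≤ lyap q x := by
  cases q <;> simp only [lyap] <;> nlinarith [sq_nonneg x.1, sq_nonneg x.2]

theorem lyap_le_two_mul_sq_add_sq : lyap q x ≤ 2 * (x.1 ^ 2 + x.2 ^ 2) := by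
  cases q <;> simp only [lyap] <;> nlinarith [sq_nonneg x.1, sq_nonneg x.2]

theorem lyap_le_two_mul_lyap (q' : Mode) : lyap q' x ≤ 2 * lyap q x := by
  cases q <;> cases q' <;> simp only [lyap] <;> nlinarith [sq_nonneg x.1, sq_nonneg x.2]

end Lyap

theorem HasDerivWithinAt.lyap_comp {q : Mode} {φ : ℝ → ℝ × ℝ} {s : Set ℝ} {x : ℝ}
    (h : HasDerivWithinAt φ (modeField q (φ x)) s x) :
    HasDerivWithinAt (fun t => lyap q (φ t)) (-(1 / 4) * lyap q (φ x)) s x := by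
  cases q
  · refine (((h.fst.fun_pow 2).const_mul 2).fun_add (h.snd.fun_pow 2)).congr_deriv ?_
    simp only [lyap, modeField, fA]
    ring
  · refine ((h.fst.fun_pow 2).fun_add ((h.snd.fun_pow 2).const_mul 2)).congr_deriv ?_
    simp only [lyap, modeField, fB]
    ring

section Trajectory

variable {q : Mode} {φ : ℝ → ℝ × ℝ} {a b : ℝ}

theorem lyap_eq_exp_mul
    (hφ : ∀ r ∈ Icc a b, HasDerivWithinAt φ (modeField q (φ r)) (Icc a b) r) :
    ∀ r ∈ Icc a b, lyap q (φ r) = exp (-(1 / 4) * (r - a)) * lyap q (φ a) :=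
  eq_exp_mul_of_hasDerivWithinAt_eq_neg_mul fun r hr => (hφ r hr).lyap_comp

theorem lyap_le_of_mem_Icc
    (hφ : ∀ r ∈ Icc a b, HasDerivWithinAt φ (modeField q (φ r)) (Icc a b) r)
    {r : ℝ} (hr : r ∈ Icc a b) : lyap q (φ r) ≤ lyap q (φ a) := by
  rw [lyap_eq_exp_mul hφ r hr]
  refine mul_le_of_le_one_left (lyap_nonneg q _) (exp_le_one_iff.2 ?_)
  nlinarith [hr.1]

theorem lyap_le_half_of_three_le
    (hφ : ∀ r ∈ Icc a b, HasDerivWithinAt φ (modeField q (φ r)) (Icc a b) r)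
    (hab : 3 ≤ b - a) : lyap q (φ b) ≤ lyap q (φ a) / 2 := by
  have hdecay : exp (-(1 / 4) * (b - a)) ≤ 1 / 2 := calc
    exp (-(1 / 4) * (b - a)) ≤ (exp (3 / 4))⁻¹ := by
      rw [← exp_neg]; exact exp_le_exp.2 (by linarith)
    _ ≤ 1 / 2 := by
      rw [one_div]; exact inv_anti₀ two_pos two_le_exp_three_div_four
  rw [lyap_eq_exp_mul hφ b ⟨by linarith, le_rfl⟩]
  nlinarith [lyap_nonneg q (φ a)]

end Trajectory

theorem lyap_le_lyap_initial {t : ℕ → ℝ} {q : ℕ → Mode} {φ : ℝ → ℝ × ℝ} {m : ℕ}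
    (hdwell : ∀ i, 1 ≤ i → i < m → 3 ≤ t i - t (i - 1))
    (hode : ∀ i, 1 ≤ i → i ≤ m → ∀ r ∈ Icc (t (i - 1)) (t i),
      HasDerivWithinAt φ (modeField (q i) (φ r)) (Icc (t (i - 1)) (t i)) r)
    {i : ℕ} (hi : 1 ≤ i) (him : i ≤ m) : lyap (q i) (φ (t (i - 1))) ≤ lyap (q 1) (φ (t 0)) := by
  induction i, hi using Nat.le_induction with
  | base => exact le_rfl
  | succ n hn ih =>
    have hdecay := lyap_le_half_of_three_le (hode n hn (by omega)) (hdwell n hn (by omega))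
    calc lyap (q (n + 1)) (φ (t (n + 1 - 1)))
        ≤ 2 * lyap (q n) (φ (t n)) := lyap_le_two_mul_lyap _ _ _
      _ ≤ lyap (q n) (φ (t (n - 1))) := by linarith
      _ ≤ lyap (q 1) (φ (t 0)) := ih (by omega)

theorem origin_stable_slow_switching_dwell_three :
    ∀ ε : ℝ, 0 < ε → ∃ δ : ℝ, 0 < δ ∧
      ∀ ω : ℝ × ℝ, enorm2 ω < δ →
        ∀ m : ℕ, 1 ≤ m → ∀ q : ℕ → Mode, ∀ s : ℕ → ℝ,
          (∀ i : ℕ, 1 ≤ i → i < m → (3 : ℝ) ≤ s i) → 0 ≤ s m →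
          ∀ φ : ℝ → ℝ × ℝ, Continuous φ → φ 0 = ω →
            (∀ i : ℕ, 1 ≤ i → i ≤ m →
              ∀ r ∈ Set.Icc (∑ j ∈ Finset.Icc 1 (i - 1), s j) (∑ j ∈ Finset.Icc 1 i, s j),
                HasDerivWithinAt φ (modeField (q i) (φ r))
                  (Set.Icc (∑ j ∈ Finset.Icc 1 (i - 1), s j) (∑ j ∈ Finset.Icc 1 i, s j)) r) →
            ∀ r ∈ Set.Icc (0 : ℝ) (∑ j ∈ Finset.Icc 1 m, s j), enorm2 (φ r) < ε := by
  intro ε hε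
  refine ⟨ε / 2, by positivity, fun ω hω m hm q s hdwell _ φ _ hφ0 hode r hr => ?_⟩
  set t : ℕ → ℝ := fun i => ∑ j ∈ Finset.Icc 1 i, s j with ht
  have ht0 : t 0 = 0 := by simp [ht]
  have hstep : ∀ i, 1 ≤ i → t i - t (i - 1) = s i := fun i hi => by
    obtain ⟨k, rfl⟩ := Nat.exists_eq_add_of_le' hi
    simp [ht, Finset.sum_Icc_succ_top]
  obtain ⟨i, hi, him, hri⟩ := exists_mem_Icc_consecutive t hm (ht0 ▸ hr.1) hr.2
  have hsq : (φ r).1 ^ 2 + (φ r).2 ^ 2 ≤ 2 * (ω.1 ^ 2 + ω.2 ^ 2) := calc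
    _ ≤ lyap (q i) (φ r) := sq_add_sq_le_lyap _ _
    _ ≤ lyap (q i) (φ (t (i - 1))) := lyap_le_of_mem_Icc (hode i hi him) hri
    _ ≤ lyap (q 1) (φ (t 0)) :=
      lyap_le_lyap_initial (fun j hj hjm => (hstep j hj).symm ▸ hdwell j hj hjm) hode hi him
    _ ≤ 2 * (ω.1 ^ 2 + ω.2 ^ 2) := by rw [ht0, hφ0]; exact lyap_le_two_mul_sq_add_sq _ _
  calc enorm2 (φ r) ≤ √2 * enorm2 ω := by
        rw [enorm2, enorm2, ← sqrt_mul zero_le_two]; exact sqrt_le_sqrt hsq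
    _ < 2 * (ε / 2) :=
        mul_lt_mul'' (by linarith [sqrt_two_lt_three_halves]) hω (sqrt_nonneg _) (sqrt_nonneg _)
    _ = ε := by ring
end
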